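/- arXiv:2604.16052 — 3 statements merged into one kernel-verified Lean document; each statement's English description precedes it below -/
import Mathlib

section
/- Let (M, d) be a metric space, let a, b ∈ M, and let γ : [0,1] → M be a constant-speed geodesic with γ(0) = a and γ(1) = b. Let τ > 0, α > 0, and set t* := ατ/(1 + ατ) ∈ (0,1). Then the point γ(t*) is a global minimizer over M of the proximal functional J(x) := (1/(2τ)) d(x, a)² + (α/2) d(x, b)²; that is, for every x ∈ M, (1/(2τ)) d(x, a)² + (α/2) d(x, b)² ≥ (1/(2τ)) d(γ(t*), a)² + (α/2) d(γ(t*), b)², where d(γ(t*), a) = t*·d(a,b) and d(γ(t*), b) = (1−t*)·d(a,b). -/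
/-!
With `p = 1/(2τ)` and `q = α/2`, the triangle inequality gives `d(x,a) + d(x,b) ≥ d(a,b)`, and
minimizing `p u² + q v²` subject to `u + v ≥ D` yields `p q D² / (p + q)`, attained at
`u = q D / (p + q)`, `v = p D / (p + q)`. The geodesic point at `t* = q / (p + q) = ατ/(1+ατ)`
has exactly these distances to `a` and `b`.
-/

open Set

def IsConstSpeedGeodesic {M : Type*} [PseudoMetricSpace M] (γ : ℝ → M) : Prop :=
  ∀ s ∈ Icc (0 : ℝ) 1, ∀ t ∈ Icc (0 : ℝ) 1, dist (γ s) (γ t) = |s - t| * dist (γ 0) (γ 1)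

namespace IsConstSpeedGeodesic

variable {M : Type*} [PseudoMetricSpace M] {γ : ℝ → M}

theorem dist_zero (hγ : IsConstSpeedGeodesic γ) {t : ℝ} (ht : t ∈ Icc (0 : ℝ) 1) :
    dist (γ t) (γ 0) = t * dist (γ 0) (γ 1) := by
  rw [hγ t ht 0 (left_mem_Icc.2 zero_le_one), sub_zero, abs_of_nonneg ht.1]

theorem dist_one (hγ : IsConstSpeedGeodesic γ) {t : ℝ} (ht : t ∈ Icc (0 : ℝ) 1) :
    dist (γ t) (γ 1) = (1 - t) * dist (γ 0) (γ 1) := by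
  rw [hγ t ht 1 (right_mem_Icc.2 zero_le_one), abs_of_nonpos (by linarith [ht.2]), neg_sub]

end IsConstSpeedGeodesic

/-- Identity behind the bound: `(p + q)(p u² + q v²) = p q (u + v)² + (p u - q v)²`. -/
theorem mul_div_add_mul_sq_le {p q u v D : ℝ} (hp : 0 < p) (hq : 0 < q) (hD : 0 ≤ D)
    (hDuv : D ≤ u + v) : p * q / (p + q) * D ^ 2 ≤ p * u ^ 2 + q * v ^ 2 := by
  rw [div_mul_eq_mul_div, div_le_iff₀ (by positivity)]
  nlinarith [sq_nonneg (p * u - q * v), pow_le_pow_left₀ hD hDuv 2, mul_pos hp hq]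

theorem mul_div_add_mul_dist_sq_le {M : Type*} [PseudoMetricSpace M] {p q : ℝ} (hp : 0 < p)
    (hq : 0 < q) (a b x : M) :
    p * q / (p + q) * dist a b ^ 2 ≤ p * dist x a ^ 2 + q * dist x b ^ 2 :=
  mul_div_add_mul_sq_le hp hq dist_nonneg (dist_comm x a ▸ dist_triangle a x b)

theorem mul_div_add_mul_sq_eq {p q : ℝ} (hp : 0 < p) (hq : 0 < q) (D : ℝ) :
    p * (q / (p + q) * D) ^ 2 + q * ((1 - q / (p + q)) * D) ^ 2 = p * q / (p + q) * D ^ 2 := by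
  field_simp
  ring

/-- State-independent contraction: the point at parameter `t* = ατ/(1+ατ)` along a
constant-speed geodesic from `a` to `b` is a global minimizer of the proximal functional
`x ↦ (1/(2τ)) d(x,a)² + (α/2) d(x,b)²`. -/
theorem stmt_6
    {M : Type*} [MetricSpace M] (a b : M) (γ : ℝ → M)
    (hgeo : ∀ s ∈ Set.Icc (0:ℝ) 1, ∀ t ∈ Set.Icc (0:ℝ) 1,
      dist (γ s) (γ t) = |s - t| * dist (γ 0) (γ 1))
    (h0 : γ 0 = a) (h1 : γ 1 = b)
    (τ α : ℝ) (hτ : 0 < τ) (hα : 0 < α) :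
    α * τ / (1 + α * τ) ∈ Set.Ioo (0:ℝ) 1 ∧
    (∀ x : M,
      1 / (2 * τ) * dist x a ^ 2 + α / 2 * dist x b ^ 2 ≥
        1 / (2 * τ) * dist (γ (α * τ / (1 + α * τ))) a ^ 2
          + α / 2 * dist (γ (α * τ / (1 + α * τ))) b ^ 2) ∧
    dist (γ (α * τ / (1 + α * τ))) a = α * τ / (1 + α * τ) * dist a b ∧
    dist (γ (α * τ / (1 + α * τ))) b = (1 - α * τ / (1 + α * τ)) * dist a b := by
  have hp : 0 < 1 / (2 * τ) := by positivity
  have hq : 0 < α / 2 := by positivity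
  have hstar : α * τ / (1 + α * τ) = α / 2 / (1 / (2 * τ) + α / 2) := by
    field_simp
  have hmem : α * τ / (1 + α * τ) ∈ Ioo (0 : ℝ) 1 := by
    refine ⟨by positivity, (div_lt_one (by positivity)).2 (by linarith)⟩
  have hγ : IsConstSpeedGeodesic γ := hgeo
  have ha := hγ.dist_zero (Ioo_subset_Icc_self hmem)
  have hb := hγ.dist_one (Ioo_subset_Icc_self hmem)
  rw [h0, h1] at ha hb
  refine ⟨hmem, fun x => ?_, ha, hb⟩
  rw [ha, hb, hstar, mul_div_add_mul_sq_eq hp hq]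
  exact mul_div_add_mul_dist_sq_le hp hq a b x
end

section
/- Let M ≥ 1, η > 0, C > 0. Let w ∈ ℝ^M with w_i ≥ 0 for all i and Σ_{i=1}^M w_i = 1, and let g ∈ ℝ^M with |g_i| ≤ C for all i. Define the mirror-descent update w'_i := w_i·exp(−η g_i) / Σ_{k=1}^M w_k·exp(−η g_k). Then: (a) w'_i ≥ 0 for all i and Σ_i w'_i = 1; (b) w'_i ≥ w_i·exp(−2ηC) for all i; (c) for every t with 1 − exp(−2ηC) < t ≤ 1, the vector h := (w' − (1−t)·w)/t satisfies h_i ≥ 0 for all i and Σ_i h_i = 1; consequently the mirror-descent update is the convex combination w' = (1−t)·w + t·h of the previous iterate with a point h of the probability simplex. -/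
/-! The normalizer `Z = ∑ₖ wₖ e^{-η gₖ}` is a convex combination of numbers in
`[e^{-ηC}, e^{ηC}]`, so every coordinate of the update satisfies
`w'ᵢ = wᵢ e^{-η gᵢ} / Z ≥ wᵢ e^{-ηC} / e^{ηC} = wᵢ e^{-2ηC}`.
A point `w'` of the simplex with `w' ≥ c • w` is `(1 - t) • w + t • h` for some `h` in the
simplex as soon as `1 - c ≤ t`: the residual `w' - (1 - t) • w` is nonnegative and has
mass `t`. -/

open Real Finset

variable {ι : Type*} [Fintype ι]

lemma exp_neg_mul_mem_Icc {η C x : ℝ} (hη : 0 ≤ η) (hx : |x| ≤ C) :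
    exp (-η * x) ∈ Set.Icc (exp (-(η * C))) (exp (η * C)) := by
  obtain ⟨hlo, hhi⟩ := abs_le.1 hx
  constructor <;> apply exp_le_exp.2
  · nlinarith
  · nlinarith

lemma sum_mul_le_of_mem_stdSimplex {w f : ι → ℝ} {b : ℝ} (hw : w ∈ stdSimplex ℝ ι)
    (hf : ∀ i, f i ≤ b) : ∑ i, w i * f i ≤ b :=
  calc ∑ i, w i * f i ≤ ∑ i, w i * b :=
        sum_le_sum fun i _ => mul_le_mul_of_nonneg_left (hf i) (hw.1 i)
    _ = b := by rw [← sum_mul, hw.2, one_mul]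

lemma sum_mul_exp_pos_of_mem_stdSimplex {w : ι → ℝ} (hw : w ∈ stdSimplex ℝ ι)
    (a : ι → ℝ) : 0 < ∑ i, w i * exp (a i) := by
  obtain ⟨i, -, hi⟩ : ∃ i ∈ univ, w i ≠ 0 :=
    exists_ne_zero_of_sum_ne_zero (by rw [hw.2]; norm_num)
  exact sum_pos' (fun j _ => mul_nonneg (hw.1 j) (exp_pos _).le)
    ⟨i, mem_univ i, mul_pos ((hw.1 i).lt_of_ne' hi) (exp_pos _)⟩

lemma div_sum_mem_stdSimplex {v : ι → ℝ} (hv : ∀ i, 0 ≤ v i) (hS : 0 < ∑ i, v i) :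
    (fun i => v i / ∑ k, v k) ∈ stdSimplex ℝ ι :=
  ⟨fun i => div_nonneg (hv i) hS.le, by rw [← sum_div, div_self hS.ne']⟩

noncomputable def multiplicativeWeightsUpdate (η : ℝ) (g w : ι → ℝ) : ι → ℝ :=
  fun i => w i * exp (-η * g i) / ∑ k, w k * exp (-η * g k)

lemma multiplicativeWeightsUpdate_mem_stdSimplex (η : ℝ) (g : ι → ℝ) {w : ι → ℝ}
    (hw : w ∈ stdSimplex ℝ ι) :
    multiplicativeWeightsUpdate η g w ∈ stdSimplex ℝ ι :=
  div_sum_mem_stdSimplex (fun i => mul_nonneg (hw.1 i) (exp_pos _).le)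
    (sum_mul_exp_pos_of_mem_stdSimplex hw _)

lemma mul_exp_le_multiplicativeWeightsUpdate {η C : ℝ} {g w : ι → ℝ} (hη : 0 ≤ η)
    (hg : ∀ i, |g i| ≤ C) (hw : w ∈ stdSimplex ℝ ι) (i : ι) :
    w i * exp (-(2 * η * C)) ≤ multiplicativeWeightsUpdate η g w i := by
  have hZ := sum_mul_exp_pos_of_mem_stdSimplex hw (fun k => -η * g k)
  have hZle : ∑ k, w k * exp (-η * g k) ≤ exp (η * C) :=
    sum_mul_le_of_mem_stdSimplex hw fun k => (exp_neg_mul_mem_Icc hη (hg k)).2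
  rw [multiplicativeWeightsUpdate, le_div_iff₀ hZ]
  calc w i * exp (-(2 * η * C)) * ∑ k, w k * exp (-η * g k)
      ≤ w i * exp (-(2 * η * C)) * exp (η * C) :=
        mul_le_mul_of_nonneg_left hZle (mul_nonneg (hw.1 i) (exp_pos _).le)
    _ = w i * exp (-(η * C)) := by rw [mul_assoc, ← exp_add]; ring_nf
    _ ≤ w i * exp (-η * g i) :=
        mul_le_mul_of_nonneg_left (exp_neg_mul_mem_Icc hη (hg i)).1 (hw.1 i)

lemma sub_mul_div_mem_stdSimplex {w w' : ι → ℝ} {c t : ℝ} (hw : w ∈ stdSimplex ℝ ι)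
    (hw' : w' ∈ stdSimplex ℝ ι) (hc : ∀ i, w i * c ≤ w' i) (ht : 1 - c ≤ t)
    (ht0 : 0 < t) :
    (fun i => (w' i - (1 - t) * w i) / t) ∈ stdSimplex ℝ ι := by
  refine ⟨fun i => div_nonneg ?_ ht0.le, ?_⟩
  · nlinarith [hc i, hw.1 i]
  · rw [← sum_div, sum_sub_distrib, ← mul_sum, hw.2, hw'.2]
    field_simp
    ring

theorem stmt_12_general
    (M : ℕ) (η C : ℝ) (hη : 0 < η) (hC : 0 < C)
    (w : Fin M → ℝ) (hw0 : ∀ i, 0 ≤ w i) (hw1 : ∑ i, w i = 1)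
    (g : Fin M → ℝ) (hg : ∀ i, |g i| ≤ C)
    (w' : Fin M → ℝ)
    (hw' : ∀ i, w' i = w i * Real.exp (-η * g i)
      / ∑ k, w k * Real.exp (-η * g k)) :
    ((∀ i, 0 ≤ w' i) ∧ ∑ i, w' i = 1) ∧
    (∀ i, w' i ≥ w i * Real.exp (-(2 * η * C))) ∧
    (∀ t : ℝ, 1 - Real.exp (-(2 * η * C)) < t → t ≤ 1 →
      (∀ i, 0 ≤ (w' i - (1 - t) * w i) / t) ∧
      (∑ i, (w' i - (1 - t) * w i) / t = 1) ∧
      (∀ i, w' i = (1 - t) * w i + t * ((w' i - (1 - t) * w i) / t))) := by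
  have hw : w ∈ stdSimplex ℝ (Fin M) := ⟨hw0, hw1⟩
  obtain rfl : w' = multiplicativeWeightsUpdate η g w := funext hw'
  have hsimplex := multiplicativeWeightsUpdate_mem_stdSimplex η g hw
  have hlower := mul_exp_le_multiplicativeWeightsUpdate hη.le hg hw
  refine ⟨hsimplex, hlower, fun t ht _ => ?_⟩
  have ht0 : 0 < t := by
    have : exp (-(2 * η * C)) ≤ 1 := exp_le_one_iff.2 (by nlinarith)
    linarith
  obtain ⟨hh0, hh1⟩ := sub_mul_div_mem_stdSimplex hw hsimplex hlower ht.le ht0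
  exact ⟨hh0, hh1, fun i => by field_simp; ring⟩

/-- Mirror descent on the simplex as a Tan–HWG observable scheme: the
multiplicative-weights update with bounded gradients (a) stays in the probability
simplex, (b) satisfies the lower bound `w'_i ≥ w_i·e^{−2ηC}`, and (c) for every
contraction factor `t` with `1 − e^{−2ηC} < t ≤ 1`, is the convex combination
`w' = (1−t)·w + t·h` with `h` in the probability simplex. -/
theorem stmt_12
    (M : ℕ) (hM : 1 ≤ M) (η C : ℝ) (hη : 0 < η) (hC : 0 < C)
    (w : Fin M → ℝ) (hw0 : ∀ i, 0 ≤ w i) (hw1 : ∑ i, w i = 1)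
    (g : Fin M → ℝ) (hg : ∀ i, |g i| ≤ C)
    (w' : Fin M → ℝ)
    (hw' : ∀ i, w' i = w i * Real.exp (-η * g i)
      / ∑ k, w k * Real.exp (-η * g k)) :
    ((∀ i, 0 ≤ w' i) ∧ ∑ i, w' i = 1) ∧
    (∀ i, w' i ≥ w i * Real.exp (-(2 * η * C))) ∧
    (∀ t : ℝ, 1 - Real.exp (-(2 * η * C)) < t → t ≤ 1 →
      (∀ i, 0 ≤ (w' i - (1 - t) * w i) / t) ∧
      (∑ i, (w' i - (1 - t) * w i) / t = 1) ∧
      (∀ i, w' i = (1 - t) * w i + t * ((w' i - (1 - t) * w i) / t))) :=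
  stmt_12_general M η C hη hC w hw0 hw1 g hg w' hw'
end

section
/- Let n ∈ ℕ and let θ₁, …, θₙ ∈ ℝ be such that cos(θ_i − θ_j) < 0 for all i ≠ j. Then n ≤ 3. -/
open Real

private lemma cos_add_int_mul (x : ℝ) (k : ℤ) : Real.cos (x + k * (2*π)) = Real.cos x :=
  (Real.cos_periodic.int_mul k) x

/-- reduce a phase into (π/2, π/2 + 2π] keeping the value mod 2π -/
private lemma reduce (x : ℝ) :
    ∃ ψ : ℝ, ψ ∈ Set.Ioc (π/2) (π/2 + 2*π) ∧ ∃ k : ℤ, x = ψ + k * (2*π) := by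
  have hp : (0:ℝ) < 2*π := by positivity
  refine ⟨toIocMod hp (π/2) x, toIocMod_mem_Ioc hp _ _, toIocDiv hp (π/2) x, ?_⟩
  have h := toIocMod_add_toIocDiv_zsmul hp (π/2) x
  have h2 : (toIocDiv hp (π/2) x) • (2*π) = ((toIocDiv hp (π/2) x : ℤ) : ℝ) * (2*π) := by
    push_cast [zsmul_eq_mul]; ring
  rw [h2] at h; linarith

/-- if the reduced phase has negative cosine, it lies in (π/2, 3π/2) -/
private lemma reduced_lt (ψ : ℝ) (hψ : ψ ∈ Set.Ioc (π/2) (π/2 + 2*π))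
    (hcos : Real.cos ψ < 0) : ψ < 3*π/2 := by
  by_contra hge
  push_neg at hge
  have heq : Real.cos (ψ - 2*π) = Real.cos ψ := Real.cos_sub_two_pi ψ
  have hmem : ψ - 2*π ∈ Set.Icc (-(π/2)) (π/2) := ⟨by linarith, by linarith [hψ.2]⟩
  have := Real.cos_nonneg_of_mem_Icc hmem
  linarith [heq ▸ this]

/-- pairwise separation: two phases in (π/2, 3π/2) with negative cosine of
difference are more than π/2 apart -/
private lemma sep (a b : ℝ) (hcos : Real.cos (a - b) < 0)
    (hab : -(π/2) ≤ a - b) (hba : a - b ≤ π/2) : False := by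
  have := Real.cos_nonneg_of_mem_Icc ⟨hab, hba⟩
  linarith

/-- On the circle, a family of phases with all pairwise negative cosine differences
(an "anti-synchronized" group) has at most three elements. -/
theorem stmt_14
    (n : ℕ) (θ : Fin n → ℝ)
    (h : ∀ i j : Fin n, i ≠ j → Real.cos (θ i - θ j) < 0) :
    n ≤ 3 := by
  by_contra hn
  push_neg at hn
  have h4 : 4 ≤ n := hn
  have hπ := Real.pi_pos
  set i0 : Fin n := ⟨0, by omega⟩ with hi0
  set i1 : Fin n := ⟨1, by omega⟩ with hi1
  set i2 : Fin n := ⟨2, by omega⟩ with hi2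
  set i3 : Fin n := ⟨3, by omega⟩ with hi3
  obtain ⟨a, ha, ka, hka⟩ := reduce (θ i1 - θ i0)
  obtain ⟨b, hb, kb, hkb⟩ := reduce (θ i2 - θ i0)
  obtain ⟨c, hc, kc, hkc⟩ := reduce (θ i3 - θ i0)
  -- cosines of the reduced phases are negative
  have hca : Real.cos a < 0 := by
    have := h i1 i0 (by simp [hi1, hi0, Fin.ext_iff])
    rwa [hka, cos_add_int_mul] at this
  have hcb : Real.cos b < 0 := by
    have := h i2 i0 (by simp [hi2, hi0, Fin.ext_iff])
    rwa [hkb, cos_add_int_mul] at this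
  have hcc : Real.cos c < 0 := by
    have := h i3 i0 (by simp [hi3, hi0, Fin.ext_iff])
    rwa [hkc, cos_add_int_mul] at this
  have ha' : a < 3*π/2 := reduced_lt a ha hca
  have hb' : b < 3*π/2 := reduced_lt b hb hcb
  have hc' : c < 3*π/2 := reduced_lt c hc hcc
  have ha1 : π/2 < a := ha.1
  have hb1 : π/2 < b := hb.1
  have hc1 : π/2 < c := hc.1
  -- cosines of pairwise differences of reduced phases are negative
  have hab : Real.cos (a - b) < 0 := by
    have := h i1 i2 (by simp [hi1, hi2, Fin.ext_iff])
    have he : θ i1 - θ i2 = a - b + ((ka - kb : ℤ) : ℝ) * (2*π) := by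
      push_cast; linarith
    rw [he, cos_add_int_mul] at this; exact this
  have hac : Real.cos (a - c) < 0 := by
    have := h i1 i3 (by simp [hi1, hi3, Fin.ext_iff])
    have he : θ i1 - θ i3 = a - c + ((ka - kc : ℤ) : ℝ) * (2*π) := by
      push_cast; linarith
    rw [he, cos_add_int_mul] at this; exact this
  have hbc : Real.cos (b - c) < 0 := by
    have := h i2 i3 (by simp [hi2, hi3, Fin.ext_iff])
    have he : θ i2 - θ i3 = b - c + ((kb - kc : ℤ) : ℝ) * (2*π) := by
      push_cast; linarith
    rw [he, cos_add_int_mul] at this; exact this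
  -- pairwise distances exceed π/2
  have dab : π/2 < a - b ∨ π/2 < b - a := by
    by_contra hct; push_neg at hct
    exact sep a b hab (by linarith [hct.2]) hct.1
  have dac : π/2 < a - c ∨ π/2 < c - a := by
    by_contra hct; push_neg at hct
    exact sep a c hac (by linarith [hct.2]) hct.1
  have dbc : π/2 < b - c ∨ π/2 < c - b := by
    by_contra hct; push_neg at hct
    exact sep b c hbc (by linarith [hct.2]) hct.1
  rcases dab with h1 | h1 <;> rcases dac with h2 | h2 <;> rcases dbc with h3 | h3 <;> linarith
end
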